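/- In the nil affine Hecke algebra H_{n+1}, with ν′_n : H_{n+1}ι_0 ⊗_{H_n[y]} ι_1 H_{n+1} → H_{n+1}ι_0 ⊕ H_{n+1}ι_{0,n} ⊗_{H_{n−1}[y]} ι_1 H_n defined by a ⊗ τ_1⋯τ_n ↦ (a, −a Σ_{s=1}^n τ_s⋯τ_{n−1} s_n ⊗ τ_1⋯τ_{s−1}) and a ⊗ τ_1⋯τ_r ↦ (0, a(x_n − x_{n+1})s_n ⊗ τ_1⋯τ_r) for r < n, one has ν′_n(Δ_{n+1}) = (1, Σ_{r=1}^n τ_r⋯τ_{n−1} s_n² ⊗ τ_1⋯τ_{r−1}), and since s_n² = 1, this equals (can(1), Δ_n) — i.e., the diagram sending a ∈ H_{n+1}[y] to (can(a), aΔ_n) agrees with a ↦ ν′_n(aΔ_{n+1}). -/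

import Mathlib

open scoped TensorProduct

namespace NilHecke

variable (k : Type) [Field k]

/-- Relations of the nil affine Hecke algebra `H n` (0-based indices: generators
`x_0,…,x_{n-1}` and `τ_0,…,τ_{n-2}`; out-of-range generators are killed). -/
inductive Rel (n : ℕ) : FreeAlgebra k (ℕ ⊕ ℕ) → FreeAlgebra k (ℕ ⊕ ℕ) → Prop
  | xkill (i : ℕ) (h : n ≤ i) : Rel n (FreeAlgebra.ι k (.inl i)) 0
  | tkill (i : ℕ) (h : n ≤ i + 1) : Rel n (FreeAlgebra.ι k (.inr i)) 0
  | tsq (i : ℕ) : Rel n (FreeAlgebra.ι k (.inr i) * FreeAlgebra.ι k (.inr i)) 0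
  | braid (i : ℕ) :
      Rel n (FreeAlgebra.ι k (.inr i) * FreeAlgebra.ι k (.inr (i+1)) * FreeAlgebra.ι k (.inr i))
        (FreeAlgebra.ι k (.inr (i+1)) * FreeAlgebra.ι k (.inr i) * FreeAlgebra.ι k (.inr (i+1)))
  | tcomm (i j : ℕ) (h : i + 1 < j) :
      Rel n (FreeAlgebra.ι k (.inr i) * FreeAlgebra.ι k (.inr j))
        (FreeAlgebra.ι k (.inr j) * FreeAlgebra.ι k (.inr i))
  | xcomm (i j : ℕ) :
      Rel n (FreeAlgebra.ι k (.inl i) * FreeAlgebra.ι k (.inl j))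
        (FreeAlgebra.ι k (.inl j) * FreeAlgebra.ι k (.inl i))
  | txcomm (i j : ℕ) (h1 : j ≠ i) (h2 : j ≠ i + 1) :
      Rel n (FreeAlgebra.ι k (.inr i) * FreeAlgebra.ι k (.inl j))
        (FreeAlgebra.ι k (.inl j) * FreeAlgebra.ι k (.inr i))
  | tx (i : ℕ) (h : i + 1 < n) :
      Rel n (FreeAlgebra.ι k (.inr i) * FreeAlgebra.ι k (.inl i)
          - FreeAlgebra.ι k (.inl (i+1)) * FreeAlgebra.ι k (.inr i)) 1
  | xt (i : ℕ) (h : i + 1 < n) :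
      Rel n (FreeAlgebra.ι k (.inl i) * FreeAlgebra.ι k (.inr i)
          - FreeAlgebra.ι k (.inr i) * FreeAlgebra.ι k (.inl (i+1))) 1

/-- The nil affine Hecke algebra on `n` strands over `k`. -/
def H (n : ℕ) : Type := RingQuot (Rel k n)

instance (n : ℕ) : Ring (H k n) := inferInstanceAs (Ring (RingQuot (Rel k n)))

instance (n : ℕ) : Algebra k (H k n) := inferInstanceAs (Algebra k (RingQuot (Rel k n)))

/-- The polynomial generator `x_{i+1}` (0-based `x_i`). -/
def X (n i : ℕ) : H k n := RingQuot.mkAlgHom k (Rel k n) (FreeAlgebra.ι k (.inl i))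

/-- The nil Hecke generator `τ_{i+1}` (0-based `τ_i`). -/
def T (n i : ℕ) : H k n := RingQuot.mkAlgHom k (Rel k n) (FreeAlgebra.ι k (.inr i))

/-- The element `s_i = τ_i (x_i - x_{i+1}) - 1`. -/
def s (n i : ℕ) : H k n := T k n i * (X k n i - X k n (i+1)) - 1

/-- The ascending product `τ_a τ_{a+1} ⋯ τ_{b-1}` (0-based). -/
def chain (n a b : ℕ) : H k n := (List.map (T k n) (List.range' a (b - a))).prod

theorem X_kill (n i : ℕ) (h : n ≤ i) : X k n i = 0 := by
  have h' := RingQuot.mkAlgHom_rel k (Rel.xkill (k := k) (n := n) i h)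
  simp only [X, map_zero] at h'
  exact h'

theorem T_kill (n i : ℕ) (h : n ≤ i + 1) : T k n i = 0 := by
  have h' := RingQuot.mkAlgHom_rel k (Rel.tkill (k := k) (n := n) i h)
  simp only [T, map_zero] at h'
  exact h'

theorem T_sq (n i : ℕ) : T k n i * T k n i = 0 := by
  have h' := RingQuot.mkAlgHom_rel k (Rel.tsq (k := k) (n := n) i)
  simp only [T, map_mul, map_zero] at h'
  exact h'

theorem T_braid (n i : ℕ) :
    T k n i * T k n (i+1) * T k n i = T k n (i+1) * T k n i * T k n (i+1) := by
  have h' := RingQuot.mkAlgHom_rel k (Rel.braid (k := k) (n := n) i)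
  simp only [T, map_mul] at h'
  exact h'

theorem T_comm (n i j : ℕ) (h : i + 1 < j) : T k n i * T k n j = T k n j * T k n i := by
  have h' := RingQuot.mkAlgHom_rel k (Rel.tcomm (k := k) (n := n) i j h)
  simp only [T, map_mul] at h'
  exact h'

theorem X_comm (n i j : ℕ) : X k n i * X k n j = X k n j * X k n i := by
  have h' := RingQuot.mkAlgHom_rel k (Rel.xcomm (k := k) (n := n) i j)
  simp only [X, map_mul] at h'
  exact h'

theorem TX_comm (n i j : ℕ) (h1 : j ≠ i) (h2 : j ≠ i + 1) :
    T k n i * X k n j = X k n j * T k n i := by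
  have h' := RingQuot.mkAlgHom_rel k (Rel.txcomm (k := k) (n := n) i j h1 h2)
  simp only [T, X, map_mul] at h'
  exact h'

theorem TX (n i : ℕ) (h : i + 1 < n) :
    T k n i * X k n i - X k n (i+1) * T k n i = 1 := by
  have h' := RingQuot.mkAlgHom_rel k (Rel.tx (k := k) (n := n) i h)
  simp only [T, X, map_mul, map_sub, map_one] at h'
  exact h'

theorem XT (n i : ℕ) (h : i + 1 < n) :
    X k n i * T k n i - T k n i * X k n (i+1) = 1 := by
  have h' := RingQuot.mkAlgHom_rel k (Rel.xt (k := k) (n := n) i h)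
  simp only [T, X, map_mul, map_sub, map_one] at h'
  exact h'

/-- The inclusion `H m → H n` for `m ≤ n`. -/
def incl (m n : ℕ) (h : m ≤ n) : H k m →ₐ[k] H k n :=
  RingQuot.liftAlgHom k ⟨FreeAlgebra.lift k (fun g =>
    match g with
    | .inl i => if i < m then X k n i else 0
    | .inr i => if i + 1 < m then T k n i else 0), by
      rintro a b r
      induction r with
      | xkill i h' => simp only [FreeAlgebra.lift_ι_apply, map_zero]; rw [if_neg (by omega)]
      | tkill i h' => simp only [FreeAlgebra.lift_ι_apply, map_zero]; rw [if_neg (by omega)]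
      | tsq i =>
          simp only [map_mul, FreeAlgebra.lift_ι_apply, map_zero]
          split_ifs <;> simp [T_sq]
      | braid i =>
          simp only [map_mul, FreeAlgebra.lift_ι_apply]
          split_ifs <;> simp [T_braid]
      | tcomm i j h' =>
          simp only [map_mul, FreeAlgebra.lift_ι_apply]
          split_ifs <;> simp [T_comm k n i j h']
      | xcomm i j =>
          simp only [map_mul, FreeAlgebra.lift_ι_apply]
          split_ifs <;> simp [X_comm k n i j]
      | txcomm i j h1 h2 =>
          simp only [map_mul, FreeAlgebra.lift_ι_apply]
          split_ifs <;> simp [TX_comm k n i j h1 h2]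
      | tx i h' =>
          simp only [map_sub, map_mul, map_one, FreeAlgebra.lift_ι_apply]
          rw [if_pos h', if_pos (by omega : i < m), if_pos (by omega : i + 1 < m)]
          exact TX k n i (by omega)
      | xt i h' =>
          simp only [map_sub, map_mul, map_one, FreeAlgebra.lift_ι_apply]
          rw [if_pos (by omega : i < m), if_pos h', if_pos h']
          exact XT k n i (by omega)⟩

/-- The shift embedding `H m → H n` (sending `x_i ↦ x_{i+1}`, `τ_i ↦ τ_{i+1}`). -/
def shj (m n : ℕ) (h : m + 1 ≤ n ∨ m = 0) : H k m →ₐ[k] H k n :=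
  RingQuot.liftAlgHom k ⟨FreeAlgebra.lift k (fun g =>
    match g with
    | .inl i => if i < m then X k n (i+1) else 0
    | .inr i => if i + 1 < m then T k n (i+1) else 0), by
      rintro a b r
      induction r with
      | xkill i h' => simp only [FreeAlgebra.lift_ι_apply, map_zero]; rw [if_neg (by omega)]
      | tkill i h' => simp only [FreeAlgebra.lift_ι_apply, map_zero]; rw [if_neg (by omega)]
      | tsq i =>
          simp only [map_mul, FreeAlgebra.lift_ι_apply, map_zero]
          split_ifs <;> simp [T_sq]
      | braid i =>
          simp only [map_mul, FreeAlgebra.lift_ι_apply]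
          split_ifs <;> simp [T_braid]
      | tcomm i j h' =>
          simp only [map_mul, FreeAlgebra.lift_ι_apply]
          split_ifs <;> simp [T_comm k n (i+1) (j+1) (by omega)]
      | xcomm i j =>
          simp only [map_mul, FreeAlgebra.lift_ι_apply]
          split_ifs <;> simp [X_comm k n (i+1) (j+1)]
      | txcomm i j h1 h2 =>
          simp only [map_mul, FreeAlgebra.lift_ι_apply]
          split_ifs <;> simp [TX_comm k n (i+1) (j+1) (by omega) (by omega)]
      | tx i h' =>
          simp only [map_sub, map_mul, map_one, FreeAlgebra.lift_ι_apply]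
          rw [if_pos h', if_pos (by omega : i < m), if_pos (by omega : i + 1 < m)]
          exact TX k n (i+1) (by omega)
      | xt i h' =>
          simp only [map_sub, map_mul, map_one, FreeAlgebra.lift_ι_apply]
          rw [if_pos (by omega : i < m), if_pos h', if_pos h']
          exact XT k n (i+1) (by omega)⟩

end NilHecke

namespace NilHecke

variable (k : Type) [Field k]

/-- `ι_0 : H_{n−1}[y] → H_n`, sending `x_i ↦ x_i`, `τ_i ↦ τ_i`, `y ↦ x_n`
(0-based: `y ↦ x_{n-1}`, the last variable). -/
def iota0 (n : ℕ) (p : Polynomial (H k (n-1))) : H k n :=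
  p.sum fun i a => incl k (n-1) n (Nat.sub_le n 1) a * X k n (n-1) ^ i

/-- `ι_1 : H_{n−1}[y] → H_n`, sending `x_i ↦ x_{i+1}`, `τ_i ↦ τ_{i+1}`, `y ↦ x_1`
(0-based: `y ↦ x_0`, the first variable). -/
def iota1 (n : ℕ) (p : Polynomial (H k (n-1))) : H k n :=
  p.sum fun i a => shj k (n-1) n (by omega) a * X k n 0 ^ i

/-- The balancing submodule of `H_n ⊗_k H_n` whose quotient is the balanced tensor
product `H_n ι_0 ⊗_{H_{n−1}[y]} ι_1 H_n`. -/
noncomputable def bal (n : ℕ) : Submodule k (H k n ⊗[k] H k n) :=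
  Submodule.span k {z | ∃ (a b : H k n) (p : Polynomial (H k (n-1))),
    z = (a * iota0 k n p) ⊗ₜ[k] b - a ⊗ₜ[k] (iota1 k n p * b)}

/-- A representative in `H_n ⊗_k H_n` of the element
`Δ_n = Σ_{r=1}^{n} (τ_r ⋯ τ_{n−1}) ⊗ (τ_1 ⋯ τ_{r−1})` (1-based indices). -/
noncomputable def deltaT (n : ℕ) : H k n ⊗[k] H k n :=
  ∑ r ∈ Finset.range n, chain k n r (n-1) ⊗ₜ[k] chain k n 0 r

/-- A representative of `p · Δ_n` for `p ∈ H_n[y]` acting through the left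
`H_n[y]`-module structure of `H_n ι_0 ⊗_{H_{n−1}[y]} ι_1 H_n` (on the left factor,
`y` acting via `x_n`, i.e. a coefficient `c·y^i` sends `m ⊗ h` to `c·m·x_n^i ⊗ h`). -/
noncomputable def actDelta (n : ℕ) (p : Polynomial (H k n)) : H k n ⊗[k] H k n :=
  ∑ r ∈ Finset.range n,
    (p.sum fun i c => c * chain k n r (n-1) * X k n (n-1) ^ i) ⊗ₜ[k] chain k n 0 r

end NilHecke

namespace NilHecke

variable (k : Type) [Field k]

/-- `ι_{0,n} : H_{n−1}[y] → H_{n+1}`, `x_i ↦ x_i`, `τ_i ↦ τ_i`, `y ↦ x_n`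
(0-based: `y ↦ X k (n+1) (n-1)`). -/
def iota0n (n : ℕ) (p : Polynomial (H k (n-1))) : H k (n+1) :=
  p.sum fun i a => incl k (n-1) (n+1) (by omega) a * X k (n+1) (n-1) ^ i

/-- The balancing submodule of `H_{n+1} ⊗_k H_n` whose quotient is
`H_{n+1} ι_{0,n} ⊗_{H_{n−1}[y]} ι_1 H_n`. -/
noncomputable def bal18 (n : ℕ) : Submodule k (H k (n+1) ⊗[k] H k n) :=
  Submodule.span k {z | ∃ (a : H k (n+1)) (b : H k n) (p : Polynomial (H k (n-1))),
    z = (a * iota0n k n p) ⊗ₜ[k] b - a ⊗ₜ[k] (iota1 k n p * b)}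

/-- The value of `ν′_n` on `a ⊗ τ_1 ⋯ τ_r` (`a ∈ H_{n+1}`, `0 ≤ r ≤ n`), with target
`H_{n+1} ι_0 ⊕ H_{n+1} ι_{0,n} ⊗_{H_{n−1}[y]} ι_1 H_n` (second component realized as a
representative in `H_{n+1} ⊗_k H_n`):
`a ⊗ τ_1⋯τ_n ↦ (a, −a Σ_{s=1}^n τ_s⋯τ_{n−1} s_n ⊗ τ_1⋯τ_{s−1})` and
`a ⊗ τ_1⋯τ_r ↦ (0, a (x_n − x_{n+1}) s_n ⊗ τ_1⋯τ_r)` for `r < n`. -/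
noncomputable def nu'val (n : ℕ) (a : H k (n+1)) (r : ℕ) :
    H k (n+1) × (H k (n+1) ⊗[k] H k n) :=
  if r = n then
    (a, -∑ s' ∈ Finset.range n,
      (a * chain k (n+1) s' (n-1) * s k (n+1) (n-1)) ⊗ₜ[k] chain k n 0 s')
  else
    (0, (a * (X k (n+1) (n-1) - X k (n+1) n) * s k (n+1) (n-1)) ⊗ₜ[k] chain k n 0 r)

/-! The last term `1 ⊗ τ_1⋯τ_n` of `Δ_{n+1}` contributes `(1, -Σ_s τ_s⋯τ_{n-1} s_n ⊗ τ_1⋯τ_{s-1})`,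
and for `r < n` one has `τ_r⋯τ_n (x_n - x_{n+1}) = τ_r⋯τ_{n-1} (s_n + 1)`, so the two
contributions combine termwise to `τ_r⋯τ_{n-1} s_n²`. Finally `s_n² = 1` because
`u = τ_n (x_n - x_{n+1})` satisfies `u τ_n = 2 τ_n`, hence `u² = 2u`. -/

theorem chain_eq_one_of_le (n a b : ℕ) (h : b ≤ a) : chain k n a b = 1 := by
  simp [chain, Nat.sub_eq_zero_of_le h]

theorem chain_succ (n a b : ℕ) (h : a ≤ b) :
    chain k n a (b+1) = chain k n a b * T k n b := by
  rw [chain, show b + 1 - a = (b - a) + 1 by omega, List.range'_concat, List.map_append,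
    List.prod_append]
  simp [chain, Nat.add_sub_cancel' h]

theorem incl_T (m n i : ℕ) (h : m ≤ n) (hi : i + 1 < m) :
    incl k m n h (T k m i) = T k n i := by
  show incl k m n h (RingQuot.mkAlgHom k (Rel k m) (FreeAlgebra.ι k (.inr i))) = T k n i
  rw [incl]
  erw [RingQuot.liftAlgHom_mkAlgHom_apply, FreeAlgebra.lift_ι_apply]
  exact if_pos hi

theorem incl_chain (m n a b : ℕ) (h : m ≤ n) (hb : b < m) :
    incl k m n h (chain k m a b) = chain k n a b := by
  rw [chain, chain, map_list_prod, List.map_map]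
  congr 1
  refine List.map_congr_left fun i hi => ?_
  rw [List.mem_range'_1] at hi
  exact incl_T k m n i h (by omega)

theorem T_mul_X_sub_X_mul_T (m i : ℕ) (h : i + 1 < m) :
    T k m i * (X k m i - X k m (i+1)) * T k m i = 2 * T k m i := by
  have hTX : T k m i * X k m i = X k m (i+1) * T k m i + 1 := sub_eq_iff_eq_add'.mp (TX k m i h)
  calc T k m i * (X k m i - X k m (i+1)) * T k m i
      = (T k m i * X k m i) * T k m i - T k m i * T k m i * X k m i
          + T k m i * (T k m i * X k m i - X k m (i+1) * T k m i) := by noncomm_ring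
    _ = 2 * T k m i := by
      rw [TX k m i h, T_sq, hTX, add_mul, mul_assoc, T_sq]
      noncomm_ring

theorem s_sq (m i : ℕ) (h : i + 1 < m) : (s k m i)^2 = 1 := by
  set u := T k m i * (X k m i - X k m (i+1))
  have hu : u * u = 2 * u := by
    rw [show u * u = T k m i * (X k m i - X k m (i+1)) * T k m i * (X k m i - X k m (i+1)) by
      simp only [u, mul_assoc], T_mul_X_sub_X_mul_T k m i h, mul_assoc]
  calc (s k m i)^2 = (u - 1)^2 := rfl
    _ = u * u - 2 * u + 1 := by noncomm_ring
    _ = 1 := by rw [hu, sub_self, zero_add]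

theorem chain_succ_mul_X_sub_X (m a i : ℕ) (h : a ≤ i) :
    chain k m a (i+1) * (X k m i - X k m (i+1)) = chain k m a i * (s k m i + 1) := by
  rw [chain_succ k m a i h, s, sub_add_cancel, mul_assoc]

theorem sum_nu'val_fst (n : ℕ) :
    (∑ r ∈ Finset.range (n+1), nu'val k n (chain k (n+1) r n) r).1 = 1 := by
  have hlow : ∀ r ∈ Finset.range n, (nu'val k n (chain k (n+1) r n) r).1 = 0 := fun r hr => by
    rw [nu'val, if_neg (Finset.mem_range.mp hr).ne]
  rw [Prod.fst_sum, Finset.sum_range_succ, Finset.sum_eq_zero hlow, nu'val, if_pos rfl, zero_add,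
    chain_eq_one_of_le k (n+1) n n le_rfl]

theorem sum_nu'val_snd (n : ℕ) (hn : 1 ≤ n) :
    (∑ r ∈ Finset.range (n+1), nu'val k n (chain k (n+1) r n) r).2
      = ∑ r ∈ Finset.range n,
          (chain k (n+1) r (n-1) * (s k (n+1) (n-1))^2) ⊗ₜ[k] chain k n 0 r := by
  have hstep : ∀ r < n, chain k (n+1) r n * (X k (n+1) (n-1) - X k (n+1) n)
      = chain k (n+1) r (n-1) * (s k (n+1) (n-1) + 1) := fun r hr => by
    simpa only [Nat.sub_add_cancel hn] using chain_succ_mul_X_sub_X k (n+1) r (n-1) (by omega)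
  rw [Prod.snd_sum, Finset.sum_range_succ, nu'val, if_pos rfl,
    chain_eq_one_of_le k (n+1) n n le_rfl, ← sub_eq_add_neg, ← Finset.sum_sub_distrib]
  refine Finset.sum_congr rfl fun r hr => ?_
  have hr : r < n := Finset.mem_range.mp hr
  rw [nu'val, if_neg hr.ne, ← TensorProduct.sub_tmul, one_mul, hstep r hr]
  congr 1
  noncomm_ring

/-- With `ν′_n` as above, one has
`ν′_n(Δ_{n+1}) = (1, Σ_{r=1}^n τ_r⋯τ_{n−1} s_n² ⊗ τ_1⋯τ_{r−1})`, and since `s_n² = 1`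
this equals `(can 1, Δ_n)` — i.e. the map `a ↦ (can a, aΔ_n)` agrees with
`a ↦ ν′_n(aΔ_{n+1})` (here evaluated on `Δ_{n+1} = Σ_{r=1}^{n+1} τ_r⋯τ_n ⊗ τ_1⋯τ_{r−1}`,
whose terms are of the basis form `a ⊗ τ_1⋯τ_{r−1}`; equality in the second component is
modulo the balancing submodule `bal18`, with `Δ_n` included via `H_n ⊂ H_{n+1}`). -/
theorem nu'_delta (n : ℕ) (hn : 1 ≤ n) :
    (∑ r ∈ Finset.range (n+1), nu'val k n (chain k (n+1) r n) r).1 = 1 ∧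
    (∑ r ∈ Finset.range (n+1), nu'val k n (chain k (n+1) r n) r).2
      = ∑ r ∈ Finset.range n,
          (chain k (n+1) r (n-1) * (s k (n+1) (n-1))^2) ⊗ₜ[k] chain k n 0 r ∧
    (s k (n+1) (n-1))^2 = 1 ∧
    (∑ r ∈ Finset.range (n+1), nu'val k n (chain k (n+1) r n) r).2
        - (∑ r ∈ Finset.range n,
            (incl k n (n+1) (Nat.le_succ n) (chain k n r (n-1))) ⊗ₜ[k] chain k n 0 r)
      ∈ bal18 k n := by
  have hs : (s k (n+1) (n-1))^2 = 1 := s_sq k (n+1) (n-1) (by omega)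
  refine ⟨sum_nu'val_fst k n, sum_nu'val_snd k n hn, hs, ?_⟩
  have hΔ : ∀ r ∈ Finset.range n,
      incl k n (n+1) (Nat.le_succ n) (chain k n r (n-1)) ⊗ₜ[k] chain k n 0 r
        = (chain k (n+1) r (n-1) * (s k (n+1) (n-1))^2) ⊗ₜ[k] chain k n 0 r := fun r _ => by
    rw [hs, mul_one, incl_chain k n (n+1) r (n-1) _ (by omega)]
  rw [sum_nu'val_snd k n hn, Finset.sum_congr rfl hΔ, sub_self]
  exact Submodule.zero_mem _

end NilHecke
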